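/- Let G be an unmixed graph as in the setup. If G contains a 4-cycle C_{ij} (edges x_iy_i, y_ix_j, x_jy_j, y_jx_i) for some i < j, then the complementary simplicial complex Δ(G) (the independence complex of G) is not strongly connected. -/

import Mathlib

open SimpleGraph

/-- `C` is a vertex cover of `G`. -/
def IsVC {V : Type*} (G : SimpleGraph V) (C : Set V) : Prop :=
  ∀ ⦃u v : V⦄, G.Adj u v → u ∈ C ∨ v ∈ C

/-- `C` is a minimal (inclusion-wise) vertex cover of `G`. -/
def IsMinVC {V : Type*} (G : SimpleGraph V) (C : Set V) : Prop :=
  IsVC G C ∧ ∀ C' : Set V, C' ⊆ C → IsVC G C' → C' = C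

/-- `A` is an independent set of `G`. -/
def IsIndep {V : Type*} (G : SimpleGraph V) (A : Set V) : Prop :=
  ∀ ⦃u v : V⦄, u ∈ A → v ∈ A → ¬ G.Adj u v

/-- `A` is a maximal independent set of `G`. -/
def IsMaxIndep {V : Type*} (G : SimpleGraph V) (A : Set V) : Prop :=
  IsIndep G A ∧ ∀ A' : Set V, A ⊆ A' → IsIndep G A' → A' = A

/-- `G` is unmixed: all minimal vertex covers have the same cardinality. -/
def Unmixed {V : Type*} (G : SimpleGraph V) : Prop :=
  ∀ C₁ C₂ : Set V, IsMinVC G C₁ → IsMinVC G C₂ → C₁.ncard = C₂.ncard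

/-- Vertex type with the two classes `X = {x_1,…,x_n}` (left) and `Y = {y_1,…,y_n}` (right). -/
abbrev VT (n : ℕ) := Fin n ⊕ Fin n

/-- The vertex `x_i`. -/
def xv {n : ℕ} (i : Fin n) : VT n := Sum.inl i

/-- The vertex `y_i`. -/
def yv {n : ℕ} (i : Fin n) : VT n := Sum.inr i

/-- The 4-cycle `C_{ij}` (edges `x_iy_i, y_ix_j, x_jy_j, y_jx_i`) is contained in `G`. -/
def HasC2 {n : ℕ} (G : SimpleGraph (VT n)) (i j : Fin n) : Prop :=
  G.Adj (xv i) (yv i) ∧ G.Adj (yv i) (xv j) ∧ G.Adj (xv j) (yv j) ∧ G.Adj (yv j) (xv i)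

/-- The `2r`-cycle `C_{i_1…i_r}` given by `f : Fin r → Fin n` is contained in `G`:
edges `x_{f s} y_{f s}` and `y_{f s} x_{f (s+1)}` (cyclically). -/
def IsCycleIn {n r : ℕ} (G : SimpleGraph (VT n)) (f : Fin r → Fin n) : Prop :=
  ∀ s : Fin r, G.Adj (xv (f s)) (yv (f s)) ∧ G.Adj (yv (f s)) (xv (f (finRotate r s)))

/-- The independence complex `Δ(G)` is strongly connected: any two facets (maximal
independent sets, all of cardinality `n`) are joined by a chain of facets in which
consecutive facets meet in `n - 1` vertices. -/
def StronglyConnectedIndep {n : ℕ} (G : SimpleGraph (VT n)) : Prop :=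
  ∀ F F' : Set (VT n), IsMaxIndep G F → IsMaxIndep G F' →
    ∃ (m : ℕ) (f : ℕ → Set (VT n)), f 0 = F ∧ f m = F' ∧
      (∀ i ≤ m, IsMaxIndep G (f i)) ∧ ∀ i < m, (f i ∩ f (i + 1)).ncard = n - 1

/-
Every facet of `Δ(G)` has `n` vertices (its complement is a minimal vertex cover, and `G` is
unmixed), so it contains exactly one vertex of each edge `x_k y_k`. In a strongly connected chain
from the facet `Y` to a facet containing `x_i`, consider the first facet that misses `y_i` or
`y_j`. It differs from its predecessor in one vertex, so it still contains one of them, say `y_i`.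
Then `x_j` is excluded by the edge `y_i x_j`, which forces `y_j`; the same holds with `i` and `j`
exchanged. So such a facet does not exist, and every facet of the chain contains `y_i`, the last
one included. That is impossible, since the last facet contains `x_i`.
-/

theorem Set.mem_or_mem_of_ncard_inter_eq_sub_one {α : Type*} {s t : Set α} (hs : s.Finite)
    {a b : α} (ha : a ∈ s) (hb : b ∈ s) (hab : a ≠ b) (h : (s ∩ t).ncard = s.ncard - 1) :
    a ∈ t ∨ b ∈ t := by
  by_contra! hout
  have hpair : ({a, b} : Set α) ⊆ s := Set.insert_subset ha (Set.singleton_subset_iff.mpr hb)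
  have hsub : s ∩ t ⊆ s \ {a, b} := by
    rintro v ⟨hvs, hvt⟩
    refine ⟨hvs, ?_⟩
    rintro (rfl | rfl)
    exacts [hout.1 hvt, hout.2 hvt]
  have hle := Set.ncard_le_ncard hsub hs.sdiff
  rw [Set.ncard_sdiff hpair (hs.subset hpair), Set.ncard_pair hab] at hle
  have h2 := Set.ncard_le_ncard hpair hs
  rw [Set.ncard_pair hab] at h2
  omega

section IndependentSets

variable {V : Type*} {G : SimpleGraph V}

theorem IsVC.isIndep_compl {C : Set V} (h : IsVC G C) : IsIndep G Cᶜ := fun _ _ hu hv hadj =>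
  (h hadj).elim hu hv

theorem IsMaxIndep.isMinVC_compl {A : Set V} (h : IsMaxIndep G A) : IsMinVC G Aᶜ := by
  refine ⟨fun u v hadj => ?_, fun C hsub hC => ?_⟩
  · by_contra! hboth
    simp only [Set.mem_compl_iff, not_not] at hboth
    exact h.1 hboth.1 hboth.2 hadj
  · rw [← h.2 Cᶜ (Set.subset_compl_comm.mp hsub) hC.isIndep_compl, compl_compl]

theorem IsIndep.exists_isMaxIndep_superset [Finite V] {A : Set V} (hA : IsIndep G A) :
    ∃ B, A ⊆ B ∧ IsMaxIndep G B := by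
  obtain ⟨B, hAB, hB⟩ :=
    (Set.toFinite {B : Set V | IsIndep G B}).exists_le_maximal (a := A) hA
  exact ⟨B, hAB, hB.1, fun B' hBB' hB' => (hB.2 hB' hBB').antisymm hBB'⟩

theorem isIndep_singleton (v : V) : IsIndep G {v} := by
  rintro a b rfl rfl
  exact G.irrefl

end IndependentSets

section Facets

variable {n : ℕ} {G : SimpleGraph (VT n)}

theorem ncard_range_xv : (Set.range (xv : Fin n → VT n)).ncard = n := by
  rw [← Nat.card_coe_set_eq, Nat.card_range_of_injective (f := (xv : Fin n → VT n)) Sum.inl_injective,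
    Nat.card_eq_fintype_card, Fintype.card_fin]

theorem IsMaxIndep.ncard_eq (hX : IsMinVC G (Set.range (xv : Fin n → VT n))) (hu : Unmixed G)
    {A : Set (VT n)} (hA : IsMaxIndep G A) : A.ncard = n := by
  have hcompl : Aᶜ.ncard = n := (hu _ _ hA.isMinVC_compl hX).trans ncard_range_xv
  have htotal : A.ncard + Aᶜ.ncard = n + n := by
    rw [Set.ncard_add_ncard_compl, Nat.card_eq_fintype_card, Fintype.card_sum, Fintype.card_fin]
  omega

/-- Projecting `x_k, y_k ↦ k` is injective on an independent set, so one with `n` vertices meets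
every pair `{x_k, y_k}`. -/
theorem IsIndep.xv_mem_iff (hm : ∀ k : Fin n, G.Adj (xv k) (yv k)) {A : Set (VT n)}
    (hA : IsIndep G A) (hcard : A.ncard = n) (k : Fin n) : xv k ∈ A ↔ yv k ∉ A := by
  refine ⟨fun hx hy => hA hx hy (hm k), fun hy => ?_⟩
  by_contra hx
  have hinj : Set.InjOn (Sum.elim id id : VT n → Fin n) A := by
    rintro (a | a) ha (b | b) hb (rfl : a = b)
    · rfl
    · exact absurd (hm a) (hA ha hb)
    · exact absurd (hm a).symm (hA ha hb)
    · rfl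
  have hmaps : ∀ v ∈ A, Sum.elim id id v ∈ ({k}ᶜ : Set (Fin n)) := by
    rintro (a | a) hv (rfl : a = k)
    exacts [hx hv, hy hv]
  have hle := Set.ncard_le_ncard_of_injOn _ hmaps hinj (Set.toFinite _)
  rw [Set.ncard_compl, Set.ncard_singleton, Nat.card_eq_fintype_card, Fintype.card_fin] at hle
  have : 0 < n := k.pos
  omega

theorem IsIndep.yv_mem_of_adj_yv_xv (hm : ∀ k : Fin n, G.Adj (xv k) (yv k)) {A : Set (VT n)}
    (hA : IsIndep G A) (hcard : A.ncard = n) {i j : Fin n} (hi : yv i ∈ A)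
    (hadj : G.Adj (yv i) (xv j)) : yv j ∈ A := by
  by_contra hj
  exact hA hi ((hA.xv_mem_iff hm hcard j).mpr hj) hadj

theorem yv_mem_of_ncard_inter_eq (hm : ∀ k : Fin n, G.Adj (xv k) (yv k)) {F F' : Set (VT n)}
    (hFcard : F.ncard = n) (hF' : IsIndep G F') (hF'card : F'.ncard = n)
    (hcut : (F ∩ F').ncard = n - 1) {i j : Fin n} (hij : i ≠ j)
    (hyixj : G.Adj (yv i) (xv j)) (hyjxi : G.Adj (yv j) (xv i)) (hi : yv i ∈ F) (hj : yv j ∈ F) :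
    yv i ∈ F' ∧ yv j ∈ F' := by
  have hne : yv i ≠ yv j := fun h => hij (Sum.inr_injective h)
  rcases Set.mem_or_mem_of_ncard_inter_eq_sub_one (Set.toFinite F) hi hj hne
      (by rw [hcut, hFcard]) with hi' | hj'
  · exact ⟨hi', hF'.yv_mem_of_adj_yv_xv hm hF'card hi' hyixj⟩
  · exact ⟨hF'.yv_mem_of_adj_yv_xv hm hF'card hj' hyjxi, hj'⟩

end Facets

theorem C2_not_strongly_connected_general {n : ℕ} (G : SimpleGraph (VT n))
    (hX : IsMinVC G (Set.range (xv : Fin n → VT n)))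
    (hY : IsMaxIndep G (Set.range (yv : Fin n → VT n)))
    (hm : ∀ i : Fin n, G.Adj (xv i) (yv i))
    (hu : Unmixed G)
    (i j : Fin n) (hij : i < j) (hC : HasC2 G i j) :
    ¬ StronglyConnectedIndep G := by
  intro hsc
  obtain ⟨F', hxi, hF'⟩ := (isIndep_singleton (G := G) (xv i)).exists_isMaxIndep_superset
  obtain ⟨m, f, hf0, hfm, hfacet, hchain⟩ := hsc _ F' hY hF'
  have hcard : ∀ t ≤ m, (f t).ncard = n := fun t ht => (hfacet t ht).ncard_eq hX hu
  have hyv : ∀ t ≤ m, yv i ∈ f t ∧ yv j ∈ f t := by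
    intro t
    induction t with
    | zero => exact fun _ => hf0 ▸ ⟨⟨i, rfl⟩, ⟨j, rfl⟩⟩
    | succ t ih =>
      intro ht
      obtain ⟨hi, hj⟩ := ih (t.le_succ.trans ht)
      exact yv_mem_of_ncard_inter_eq hm (hcard t (t.le_succ.trans ht)) (hfacet _ ht).1
        (hcard _ ht) (hchain t ht) hij.ne hC.2.1 hC.2.2.2 hi hj
  have hyi : yv i ∈ F' := hfm ▸ (hyv m le_rfl).1
  exact hF'.1 (hxi rfl) hyi (hm i)

/-- If the unmixed graph `G` (setup (*)) contains a 4-cycle `C_{ij}` for some `i < j`,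
then `Δ(G)` is not strongly connected. -/
theorem C2_not_strongly_connected {n : ℕ} (G : SimpleGraph (VT n))
    (hni : ∀ v : VT n, ∃ u : VT n, G.Adj u v)
    (hX : IsMinVC G (Set.range (xv : Fin n → VT n)))
    (hY : IsMaxIndep G (Set.range (yv : Fin n → VT n)))
    (hm : ∀ i : Fin n, G.Adj (xv i) (yv i))
    (hht : ∀ C : Set (VT n), IsVC G C → n ≤ C.ncard)
    (hu : Unmixed G)
    (i j : Fin n) (hij : i < j) (hC : HasC2 G i j) :
    ¬ StronglyConnectedIndep G :=
  C2_not_strongly_connected_general G hX hY hm hu i j hij hC
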